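/- arXiv:1605.02523 — 4 statements merged into one kernel-verified Lean document; each statement's English description precedes it below -/
import Mathlib

section
/- Let E be a real normed space, Ω ⊆ ℝ^m open, H : E → ℝ and F : E → ℝ^m twice continuously differentiable, and ũ : Ω → E a C¹ family satisfying the stationary equation D_{u_ξ} H = ξ · D_{u_ξ} F for all ξ ∈ Ω, where u_ξ = ũ(ξ). Define W(ξ) = H(u_ξ) − ξ · F(u_ξ). Then D_ξ W(η) = −η · F(u_ξ) for all η ∈ ℝ^m. -/
open scoped BigOperators

/-- First derivative of `W(ξ) = H(u_ξ) − ξ·F(u_ξ)` along a family of solutions of the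
stationary equation `D_{u_ξ}H = ξ · D_{u_ξ}F`: one has `D_ξ W(η) = −η·F(u_ξ)`. -/
theorem stmt_6 {E : Type*} [NormedAddCommGroup E] [NormedSpace ℝ E] {m : ℕ}
    (Ω : Set (Fin m → ℝ)) (hΩ : IsOpen Ω)
    (H : E → ℝ) (F : E → Fin m → ℝ)
    (hH : ContDiff ℝ 2 H) (hF : ContDiff ℝ 2 F)
    (u : (Fin m → ℝ) → E) (hu : ContDiffOn ℝ 1 u Ω)
    (hstat : ∀ ξ ∈ Ω, ∀ v : E,
      fderiv ℝ H (u ξ) v = ∑ j, ξ j * fderiv ℝ F (u ξ) v j)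
    (W : (Fin m → ℝ) → ℝ)
    (hW : ∀ ξ, W ξ = H (u ξ) - ∑ j, ξ j * F (u ξ) j) :
    ∀ ξ ∈ Ω, ∀ η : Fin m → ℝ,
      fderiv ℝ W ξ η = -∑ j, η j * F (u ξ) j := by
  intro ξ hξ η
  have hmem : Ω ∈ nhds ξ := hΩ.mem_nhds hξ
  have hA : DifferentiableAt ℝ u ξ :=
    ((hu.differentiableOn (by norm_num)) ξ hξ).differentiableAt hmem
  set A := fderiv ℝ u ξ with hAdef
  have hAu : HasFDerivAt u A ξ := hA.hasFDerivAt
  have hHd : HasFDerivAt H (fderiv ℝ H (u ξ)) (u ξ) :=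
    ((hH.differentiable (by norm_num)) (u ξ)).hasFDerivAt
  have hFd : HasFDerivAt F (fderiv ℝ F (u ξ)) (u ξ) :=
    ((hF.differentiable (by norm_num)) (u ξ)).hasFDerivAt
  have hHc : HasFDerivAt (fun ζ => H (u ζ)) ((fderiv ℝ H (u ξ)).comp A) ξ :=
    hHd.comp ξ hAu
  -- derivative of each term ζ ↦ ζ j * F (u ζ) j
  have hterm : ∀ j : Fin m, HasFDerivAt (fun ζ : Fin m → ℝ => ζ j * F (u ζ) j)
      ((ξ j) • ((ContinuousLinearMap.proj j).comp ((fderiv ℝ F (u ξ)).comp A))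
        + (F (u ξ) j) • (ContinuousLinearMap.proj (R := ℝ) (φ := fun _ : Fin m => ℝ) j)) ξ := by
    intro j
    have h1 : HasFDerivAt (fun ζ : Fin m → ℝ => ζ j)
        (ContinuousLinearMap.proj (R := ℝ) (φ := fun _ : Fin m => ℝ) j) ξ :=
      (ContinuousLinearMap.proj (R := ℝ) (φ := fun _ : Fin m => ℝ) j).hasFDerivAt
    have h2 : HasFDerivAt (fun ζ : Fin m → ℝ => F (u ζ) j)
        ((ContinuousLinearMap.proj j).comp ((fderiv ℝ F (u ξ)).comp A)) ξ := by
      have := ((ContinuousLinearMap.proj (R := ℝ) (φ := fun _ : Fin m => ℝ) j).hasFDerivAt.comp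
        ξ (hFd.comp ξ hAu))
      exact this
    exact h1.mul h2
  have hsum : HasFDerivAt (fun ζ : Fin m → ℝ => ∑ j, ζ j * F (u ζ) j)
      (∑ j, ((ξ j) • ((ContinuousLinearMap.proj j).comp ((fderiv ℝ F (u ξ)).comp A))
        + (F (u ξ) j) • (ContinuousLinearMap.proj (R := ℝ) (φ := fun _ : Fin m => ℝ) j))) ξ :=
    HasFDerivAt.fun_sum (fun j _ => hterm j)
  have hWd : HasFDerivAt W
      ((fderiv ℝ H (u ξ)).comp A
        - ∑ j, ((ξ j) • ((ContinuousLinearMap.proj j).comp ((fderiv ℝ F (u ξ)).comp A))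
        + (F (u ξ) j) • (ContinuousLinearMap.proj (R := ℝ) (φ := fun _ : Fin m => ℝ) j))) ξ := by
    have : W = fun ζ => H (u ζ) - ∑ j, ζ j * F (u ζ) j := funext hW
    rw [this]
    exact hHc.sub hsum
  rw [hWd.fderiv]
  simp only [ContinuousLinearMap.sub_apply, ContinuousLinearMap.sum_apply,
    ContinuousLinearMap.add_apply, ContinuousLinearMap.smul_apply,
    ContinuousLinearMap.comp_apply, ContinuousLinearMap.proj_apply, smul_eq_mul]
  rw [hstat ξ hξ (A η), Finset.sum_add_distrib]
  ring_nf
  simp [mul_comm]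
end

section
/- Under the same setting (a C¹ family ũ : Ω → E of solutions of D_{u_ξ}(H − ξ·F) = 0, with W(ξ) = H(u_ξ) − ξ·F(u_ξ) and F̂(ξ) = F(u_ξ)), the Hessian of W satisfies D²_ξ W(η1, η2) = −D_{u_ξ}(η1·F)(D_ξ ũ(η2)) for all η1, η2 ∈ ℝ^m; equivalently D²_ξ W = −D_ξ F̂ as a bilinear form on ℝ^m. -/
open scoped BigOperators

/-- Hessian of `W(ξ) = H(u_ξ) − ξ·F(u_ξ)` along a family of solutions of the
stationary equation: `D²_ξ W(η₁, η₂) = −D_{u_ξ}(η₁·F)(D_ξũ(η₂))`, i.e.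
`D²_ξ W = −D_ξ F̂` as a bilinear form on `ℝ^m`. -/
theorem stmt_7 {E : Type*} [NormedAddCommGroup E] [NormedSpace ℝ E] {m : ℕ}
    (Ω : Set (Fin m → ℝ)) (hΩ : IsOpen Ω)
    (H : E → ℝ) (F : E → Fin m → ℝ)
    (hH : ContDiff ℝ 2 H) (hF : ContDiff ℝ 2 F)
    (u : (Fin m → ℝ) → E) (hu : ContDiffOn ℝ 1 u Ω)
    (hstat : ∀ ξ ∈ Ω, ∀ v : E,
      fderiv ℝ H (u ξ) v = ∑ j, ξ j * fderiv ℝ F (u ξ) v j)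
    (W : (Fin m → ℝ) → ℝ)
    (hW : ∀ ξ, W ξ = H (u ξ) - ∑ j, ξ j * F (u ξ) j) :
    ∀ ξ ∈ Ω, ∀ η1 η2 : Fin m → ℝ,
      fderiv ℝ (fderiv ℝ W) ξ η2 η1
        = -∑ j, η1 j * fderiv ℝ F (u ξ) (fderiv ℝ u ξ η2) j ∧
      fderiv ℝ (fderiv ℝ W) ξ η2 η1
        = -∑ j, η1 j * fderiv ℝ (fun ζ => F (u ζ)) ξ η2 j := by
  set B : (Fin m → ℝ) →L[ℝ] (Fin m → ℝ) →L[ℝ] ℝ :=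
    ∑ j, (ContinuousLinearMap.proj j).smulRight
      (ContinuousLinearMap.proj (R := ℝ) (φ := fun _ : Fin m => ℝ) j) with hB
  have hBapp : ∀ (c η : Fin m → ℝ), B c η = ∑ j, c j * η j := by
    intro c η
    simp [hB, ContinuousLinearMap.sum_apply, smul_eq_mul]
  have hud : ∀ ζ ∈ Ω, DifferentiableAt ℝ u ζ := fun ζ hζ =>
    ((hu.differentiableOn one_ne_zero) ζ hζ).differentiableAt (hΩ.mem_nhds hζ)
  have hW' : ∀ ζ ∈ Ω, fderiv ℝ W ζ = -(B (F (u ζ))) := by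
    intro ζ hζ
    have hU : HasFDerivAt u (fderiv ℝ u ζ) ζ := (hud ζ hζ).hasFDerivAt
    have hHd : HasFDerivAt H (fderiv ℝ H (u ζ)) (u ζ) :=
      ((hH.differentiable two_ne_zero) (u ζ)).hasFDerivAt
    have hFd : HasFDerivAt F (fderiv ℝ F (u ζ)) (u ζ) :=
      ((hF.differentiable two_ne_zero) (u ζ)).hasFDerivAt
    have hHc : HasFDerivAt (fun ζ => H (u ζ))
        ((fderiv ℝ H (u ζ)).comp (fderiv ℝ u ζ)) ζ := hHd.comp ζ hU
    have hFj : ∀ j, HasFDerivAt (fun ζ => F (u ζ) j)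
        ((ContinuousLinearMap.proj (R := ℝ) (φ := fun _ : Fin m => ℝ) j).comp
          ((fderiv ℝ F (u ζ)).comp (fderiv ℝ u ζ))) ζ := fun j =>
      ((ContinuousLinearMap.proj (R := ℝ) (φ := fun _ : Fin m => ℝ) j).hasFDerivAt).comp ζ
        (hFd.comp ζ hU)
    have hterm : ∀ j : Fin m, HasFDerivAt (fun ζ => ζ j * F (u ζ) j)
        (ζ j • ((ContinuousLinearMap.proj (R := ℝ) (φ := fun _ : Fin m => ℝ) j).comp
          ((fderiv ℝ F (u ζ)).comp (fderiv ℝ u ζ))) +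
          F (u ζ) j • (ContinuousLinearMap.proj (R := ℝ) (φ := fun _ : Fin m => ℝ) j)) ζ :=
      fun j => ((ContinuousLinearMap.proj (R := ℝ) (φ := fun _ : Fin m => ℝ) j).hasFDerivAt).mul
        (hFj j)
    have hWd : HasFDerivAt W
        ((fderiv ℝ H (u ζ)).comp (fderiv ℝ u ζ) -
          ∑ j, (ζ j • ((ContinuousLinearMap.proj (R := ℝ) (φ := fun _ : Fin m => ℝ) j).comp
            ((fderiv ℝ F (u ζ)).comp (fderiv ℝ u ζ))) +
            F (u ζ) j • (ContinuousLinearMap.proj (R := ℝ) (φ := fun _ : Fin m => ℝ) j))) ζ := by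
      have : W = fun ζ => H (u ζ) - ∑ j, ζ j * F (u ζ) j := funext hW
      rw [this]
      exact hHc.sub (HasFDerivAt.fun_sum (fun j _ => hterm j))
    rw [hWd.fderiv]
    ext η
    have hs := hstat ζ hζ (fderiv ℝ u ζ η)
    simp only [ContinuousLinearMap.sub_apply, ContinuousLinearMap.coe_comp', Function.comp_apply,
      ContinuousLinearMap.sum_apply, ContinuousLinearMap.add_apply,
      ContinuousLinearMap.smul_apply, smul_eq_mul, ContinuousLinearMap.neg_apply,
      ContinuousLinearMap.proj_apply, hBapp, hs, Finset.sum_add_distrib]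
    ring
  intro ξ hξ η1 η2
  have hev : fderiv ℝ W =ᶠ[nhds ξ] fun ζ => -(B (F (u ζ))) := by
    filter_upwards [hΩ.mem_nhds hξ] with ζ hζ using hW' ζ hζ
  have hFu : DifferentiableAt ℝ (fun ζ => F (u ζ)) ξ :=
    (((hF.differentiable two_ne_zero) (u ξ)).comp ξ (hud ξ hξ))
  have h2 : fderiv ℝ (fderiv ℝ W) ξ = (-B).comp (fderiv ℝ (fun ζ => F (u ζ)) ξ) := by
    rw [hev.fderiv_eq]
    have : (fun ζ => -(B (F (u ζ)))) = (fun c => (-B) c) ∘ (fun ζ => F (u ζ)) := rfl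
    rw [this, fderiv_comp ξ ((-B).differentiableAt) hFu, (-B).fderiv]
  have hchain : fderiv ℝ (fun ζ => F (u ζ)) ξ = (fderiv ℝ F (u ξ)).comp (fderiv ℝ u ξ) :=
    fderiv_comp ξ ((hF.differentiable two_ne_zero) (u ξ)) (hud ξ hξ)
  constructor
  · rw [h2, hchain]
    simp [hBapp, mul_comm]
  · rw [h2]
    simp [hBapp, mul_comm]
end

section
/- Under the same setting, for all η1, η2 ∈ ℝ^m one has D²_{u_ξ} L_ξ (D_ξ ũ(η1), D_ξ ũ(η2)) = −D²_ξ W(η1, η2). Consequently, if X ⊆ ℝ^m is a subspace on which D²_ξ W is positive definite and D_ξ ũ is injective, then D_ξ ũ(X) is a subspace of E of the same dimension on which D²_{u_ξ} L_ξ is negative definite; hence the Morse index of L_ξ at u_ξ is at least the number of positive eigenvalues of D²_ξ W. -/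
open scoped BigOperators

/-- The continuous bilinear pairing `(c, η) ↦ ∑ j, c j * η j` on `Fin m → ℝ`. -/
noncomputable def stmt9Bmap (m : ℕ) : (Fin m → ℝ) →L[ℝ] ((Fin m → ℝ) →L[ℝ] ℝ) :=
  LinearMap.toContinuousLinearMap
    { toFun := fun c => LinearMap.toContinuousLinearMap
        { toFun := fun η => ∑ j, c j * η j
          map_add' := fun x y => by
            simp [mul_add, Finset.sum_add_distrib]
          map_smul' := fun r x => by
            simp [Finset.mul_sum, mul_left_comm] }
      map_add' := fun c d => by
        ext η
        simp [add_mul, Finset.sum_add_distrib, LinearMap.coe_toContinuousLinearMap']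
      map_smul' := fun r c => by
        ext η
        simp [Finset.mul_sum, mul_assoc, LinearMap.coe_toContinuousLinearMap'] }

@[simp] lemma stmt9Bmap_apply (m : ℕ) (c η : Fin m → ℝ) :
    stmt9Bmap m c η = ∑ j, c j * η j := by
  simp [stmt9Bmap, LinearMap.coe_toContinuousLinearMap']

/-- `D²_{u_ξ}L_ξ(D_ξũ(η₁), D_ξũ(η₂)) = −D²_ξW(η₁, η₂)`. Consequently, if `X ⊆ ℝ^m`
is a subspace on which `D²_ξW` is positive definite and `D_ξũ` is injective, then
`D_ξũ(X)` is a subspace of `E` of the same dimension on which `D²_{u_ξ}L_ξ` is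
negative definite. -/
theorem stmt_9 {E : Type*} [NormedAddCommGroup E] [NormedSpace ℝ E] {m : ℕ}
    (Ω : Set (Fin m → ℝ)) (hΩ : IsOpen Ω)
    (H : E → ℝ) (F : E → Fin m → ℝ)
    (hH : ContDiff ℝ 2 H) (hF : ContDiff ℝ 2 F)
    (u : (Fin m → ℝ) → E) (hu : ContDiffOn ℝ 1 u Ω)
    (hstat : ∀ ξ ∈ Ω, ∀ v : E,
      fderiv ℝ H (u ξ) v = ∑ j, ξ j * fderiv ℝ F (u ξ) v j)
    (L : (Fin m → ℝ) → E → ℝ)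
    (hL : ∀ ξ w, L ξ w = H w - ∑ j, ξ j * F w j)
    (W : (Fin m → ℝ) → ℝ)
    (hW : ∀ ξ, W ξ = H (u ξ) - ∑ j, ξ j * F (u ξ) j) :
    ∀ ξ ∈ Ω,
      (∀ η1 η2 : Fin m → ℝ,
        fderiv ℝ (fderiv ℝ (L ξ)) (u ξ) (fderiv ℝ u ξ η1) (fderiv ℝ u ξ η2)
          = -(fderiv ℝ (fderiv ℝ W) ξ η1 η2)) ∧
      (∀ X : Submodule ℝ (Fin m → ℝ),
        (∀ η ∈ X, η ≠ 0 → 0 < fderiv ℝ (fderiv ℝ W) ξ η η) →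
        Function.Injective (fderiv ℝ u ξ) →
        Module.finrank ℝ (X.map (fderiv ℝ u ξ).toLinearMap) = Module.finrank ℝ X ∧
        ∀ w ∈ X.map (fderiv ℝ u ξ).toLinearMap, w ≠ 0 →
          fderiv ℝ (fderiv ℝ (L ξ)) (u ξ) w w < 0) := by
  intro ξ hξ
  classical
  set B := stmt9Bmap m with hBdef
  -- basic differentiability facts
  have hudiff : ∀ ζ ∈ Ω, HasFDerivAt u (fderiv ℝ u ζ) ζ := fun ζ hζ =>
    ((hu.contDiffAt (hΩ.mem_nhds hζ)).differentiableAt one_ne_zero).hasFDerivAt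
  have hHdiff : Differentiable ℝ H := hH.differentiable two_ne_zero
  have hFdiff : Differentiable ℝ F := hF.differentiable two_ne_zero
  have hH1 : ContDiff ℝ 1 (fderiv ℝ H) := hH.fderiv_right (by norm_num)
  have hF1 : ContDiff ℝ 1 (fderiv ℝ F) := hF.fderiv_right (by norm_num)
  have hH' : HasFDerivAt (fderiv ℝ H) (fderiv ℝ (fderiv ℝ H) (u ξ)) (u ξ) :=
    ((hH1.differentiable one_ne_zero) (u ξ)).hasFDerivAt
  have hF' : HasFDerivAt (fderiv ℝ F) (fderiv ℝ (fderiv ℝ F) (u ξ)) (u ξ) :=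
    ((hF1.differentiable one_ne_zero) (u ξ)).hasFDerivAt
  set Du := fderiv ℝ u ξ with hDudef
  -- Key A : differentiating the stationarity condition
  have keyA : ∀ v : E, ∀ η : Fin m → ℝ,
      fderiv ℝ (fderiv ℝ H) (u ξ) (Du η) v
        = (∑ j, η j * fderiv ℝ F (u ξ) v j)
          + ∑ j, ξ j * fderiv ℝ (fderiv ℝ F) (u ξ) (Du η) v j := by
    intro v η
    have hc : HasFDerivAt (fun ζ => fderiv ℝ H (u ζ))
        ((fderiv ℝ (fderiv ℝ H) (u ξ)).comp Du) ξ := hH'.comp ξ (hudiff ξ hξ)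
    have h1 := hc.clm_apply (hasFDerivAt_const v ξ)
    have hcF : HasFDerivAt (fun ζ => fderiv ℝ F (u ζ))
        ((fderiv ℝ (fderiv ℝ F) (u ξ)).comp Du) ξ := hF'.comp ξ (hudiff ξ hξ)
    have h2 := hcF.clm_apply (hasFDerivAt_const v ξ)
    have h3 : ∀ j : Fin m, HasFDerivAt
        (fun ζ : Fin m → ℝ => ζ j * fderiv ℝ F (u ζ) v j) _ ξ := fun j =>
      ((ContinuousLinearMap.proj (R := ℝ) (φ := fun _ : Fin m => ℝ) j).hasFDerivAt).mul
        ((ContinuousLinearMap.proj (R := ℝ) (φ := fun _ : Fin m => ℝ) j).hasFDerivAt.comp ξ h2)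
    have h4 := HasFDerivAt.fun_sum (fun j (_ : j ∈ Finset.univ) => h3 j)
    have hφ := h1.sub h4
    have hzero : (fun ζ => fderiv ℝ H (u ζ) v - ∑ j, ζ j * fderiv ℝ F (u ζ) v j)
        =ᶠ[nhds ξ] fun _ => (0 : ℝ) := by
      filter_upwards [hΩ.mem_nhds hξ] with ζ hζ
      simp [hstat ζ hζ v]
    have hφ0 := hzero.hasFDerivAt_iff.mp hφ
    have hDeq := hφ0.unique (hasFDerivAt_const 0 ξ)
    have hη := ContinuousLinearMap.ext_iff.mp hDeq η
    simp only [ContinuousLinearMap.sub_apply, ContinuousLinearMap.add_apply,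
      ContinuousLinearMap.coe_comp', Function.comp_apply, ContinuousLinearMap.flip_apply,
      ContinuousLinearMap.zero_apply, ContinuousLinearMap.coe_sum',
      Finset.sum_apply, ContinuousLinearMap.coe_smul', Pi.smul_apply,
      ContinuousLinearMap.proj_apply, smul_eq_mul, ContinuousLinearMap.comp_zero,
      ContinuousLinearMap.zero_comp, zero_add, add_zero, mul_zero, zero_mul] at hη
    have hsplit : ∀ j : Fin m,
        ξ j * (fderiv ℝ (fderiv ℝ F) (u ξ) (Du η) v j)
          + fderiv ℝ F (u ξ) v j * η j
        = ξ j * fderiv ℝ (fderiv ℝ F) (u ξ) (Du η) v j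
          + η j * fderiv ℝ F (u ξ) v j := fun j => by ring
    rw [sub_eq_zero] at hη
    rw [hη]
    rw [Finset.sum_congr rfl (fun j _ => hsplit j), Finset.sum_add_distrib]
    ring
  -- Key B : explicit second derivative of L ξ
  have hLfun : L ξ = fun w => H w - B ξ (F w) := funext fun w => by
    simp [hL ξ w, hBdef, stmt9Bmap_apply]
  have hLd : ∀ w, fderiv ℝ (L ξ) w = fderiv ℝ H w - (B ξ).comp (fderiv ℝ F w) := by
    intro w
    have h1 : HasFDerivAt (L ξ) (fderiv ℝ H w - (B ξ).comp (fderiv ℝ F w)) w := by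
      rw [hLfun]
      exact (hHdiff w).hasFDerivAt.sub
        (((B ξ).hasFDerivAt).comp w (hFdiff w).hasFDerivAt)
    exact h1.fderiv
  have hLd' : HasFDerivAt (fderiv ℝ (L ξ))
      (fderiv ℝ (fderiv ℝ H) (u ξ)
        - (ContinuousLinearMap.compL ℝ E (Fin m → ℝ) ℝ (B ξ)).comp
            (fderiv ℝ (fderiv ℝ F) (u ξ))) (u ξ) := by
    have heq : (fderiv ℝ (L ξ))
        = fun w => fderiv ℝ H w
            - (ContinuousLinearMap.compL ℝ E (Fin m → ℝ) ℝ (B ξ)) (fderiv ℝ F w) :=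
      funext fun w => by rw [hLd w]; rfl
    rw [heq]
    exact hH'.sub
      (((ContinuousLinearMap.compL ℝ E (Fin m → ℝ) ℝ (B ξ)).hasFDerivAt).comp (u ξ) hF')
  have keyB : ∀ w₁ w₂ : E, fderiv ℝ (fderiv ℝ (L ξ)) (u ξ) w₁ w₂
      = fderiv ℝ (fderiv ℝ H) (u ξ) w₁ w₂
        - ∑ j, ξ j * fderiv ℝ (fderiv ℝ F) (u ξ) w₁ w₂ j := by
    intro w₁ w₂
    rw [hLd'.fderiv]
    simp [ContinuousLinearMap.compL_apply, hBdef, stmt9Bmap_apply]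
  -- Key C : explicit first and second derivatives of W
  have hWd : ∀ ζ ∈ Ω, fderiv ℝ W ζ = -(B.flip (F (u ζ))) := by
    intro ζ hζ
    have hWfun : W = fun ζ' => H (u ζ') - B ζ' (F (u ζ')) := funext fun ζ' => by
      simp [hW ζ', hBdef, stmt9Bmap_apply]
    have hA : HasFDerivAt (fun ζ' => H (u ζ'))
        ((fderiv ℝ H (u ζ)).comp (fderiv ℝ u ζ)) ζ :=
      (hHdiff (u ζ)).hasFDerivAt.comp ζ (hudiff ζ hζ)
    have hBB : HasFDerivAt (fun ζ' => B ζ' (F (u ζ')))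
        ((B ζ).comp ((fderiv ℝ F (u ζ)).comp (fderiv ℝ u ζ)) + B.flip (F (u ζ))) ζ :=
      (B.hasFDerivAt).clm_apply ((hFdiff (u ζ)).hasFDerivAt.comp ζ (hudiff ζ hζ))
    have hWhas : HasFDerivAt W
        ((fderiv ℝ H (u ζ)).comp (fderiv ℝ u ζ)
          - ((B ζ).comp ((fderiv ℝ F (u ζ)).comp (fderiv ℝ u ζ)) + B.flip (F (u ζ)))) ζ := by
      rw [hWfun]; exact hA.sub hBB
    rw [hWhas.fderiv]
    ext η
    have := hstat ζ hζ (fderiv ℝ u ζ η)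
    simp only [ContinuousLinearMap.sub_apply, ContinuousLinearMap.add_apply,
      ContinuousLinearMap.coe_comp', Function.comp_apply, ContinuousLinearMap.flip_apply,
      ContinuousLinearMap.neg_apply, hBdef, stmt9Bmap_apply]
    rw [this]
    ring
  have hWev : fderiv ℝ W =ᶠ[nhds ξ] fun ζ => -(B.flip (F (u ζ))) := by
    filter_upwards [hΩ.mem_nhds hξ] with ζ hζ
    exact hWd ζ hζ
  have hW2has : HasFDerivAt (fun ζ => -(B.flip (F (u ζ))))
      (-(B.flip.comp ((fderiv ℝ F (u ξ)).comp Du))) ξ :=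
    ((B.flip.hasFDerivAt).comp ξ ((hFdiff (u ξ)).hasFDerivAt.comp ξ (hudiff ξ hξ))).neg
  have hW2 : fderiv ℝ (fderiv ℝ W) ξ = -(B.flip.comp ((fderiv ℝ F (u ξ)).comp Du)) := by
    rw [hWev.fderiv_eq]; exact hW2has.fderiv
  have keyC : ∀ η1 η2 : Fin m → ℝ, fderiv ℝ (fderiv ℝ W) ξ η1 η2
      = -∑ j, η2 j * fderiv ℝ F (u ξ) (Du η1) j := by
    intro η1 η2
    rw [hW2]
    simp [hBdef, stmt9Bmap_apply, mul_comm]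
  -- symmetry of the second derivative of L ξ
  have hLdiffble : ∀ w, HasFDerivAt (L ξ) (fderiv ℝ (L ξ) w) w := by
    intro w
    rw [hLd w, hLfun]
    exact (hHdiff w).hasFDerivAt.sub (((B ξ).hasFDerivAt).comp w (hFdiff w).hasFDerivAt)
  have hsymm : ∀ w₁ w₂ : E, fderiv ℝ (fderiv ℝ (L ξ)) (u ξ) w₁ w₂
      = fderiv ℝ (fderiv ℝ (L ξ)) (u ξ) w₂ w₁ := by
    intro w₁ w₂
    exact second_derivative_symmetric hLdiffble (hLd'.fderiv ▸ hLd') w₁ w₂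
  -- the main identity
  have main : ∀ η1 η2 : Fin m → ℝ,
      fderiv ℝ (fderiv ℝ (L ξ)) (u ξ) (Du η1) (Du η2)
        = -(fderiv ℝ (fderiv ℝ W) ξ η1 η2) := by
    intro η1 η2
    rw [hsymm (Du η1) (Du η2), keyB, keyC, keyA (Du η1) η2]
    ring
  refine ⟨main, fun X hpos hinj => ?_⟩
  have hinj' : Function.Injective (fderiv ℝ u ξ).toLinearMap := hinj
  constructor
  · exact (Submodule.equivMapOfInjective (fderiv ℝ u ξ).toLinearMap hinj' X).finrank_eq.symm
  · rintro w hw hw0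
    obtain ⟨η, hη, rfl⟩ := Submodule.mem_map.mp hw
    have hne : η ≠ 0 := by
      rintro rfl
      simp at hw0
    have hpos' := hpos η hη hne
    have hmm := main η η
    have hcoe : (fderiv ℝ u ξ).toLinearMap η = Du η := rfl
    rw [hcoe, hmm]
    linarith
end

section
/- Let E be a Hilbert space, B a continuous symmetric bilinear form on E with associated bounded self-adjoint operator A (⟨v, A w⟩ = B(v,w)). Let E₀ = Ker A be finite dimensional, and suppose Y is a closed subspace of E₀^⊥ with finite codimension in E₀^⊥ such that B(v,v) > 0 for all nonzero v ∈ Y. Let P be the orthogonal projection onto Y. If inf(σ(A) ∩ (0, ∞)) > 0 and the negative spectral subspace of A is finite dimensional, then there exists δ > 0 such that B(v,v) ≥ δ‖v‖² for all v ∈ Y. -/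
open scoped RealInnerProductSpace
open Polynomial

section AuxiliaryLemmas

variable {H : Type*} [NormedAddCommGroup H] [InnerProductSpace ℝ H] [CompleteSpace H]

lemma sa_inner {T : H →L[ℝ] H} (hT : IsSelfAdjoint T) (x y : H) :
    ⟪T x, y⟫ = ⟪x, T y⟫ := by
  conv_lhs => rw [← hT.adjoint_eq]
  exact ContinuousLinearMap.adjoint_inner_left T y x

lemma isUnit_of_coercive {T : H →L[ℝ] H} {c : ℝ} (hc : 0 < c)
    (h : ∀ v, c * ‖v‖ ^ 2 ≤ ⟪T v, v⟫) : IsUnit T := by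
  have hB : IsCoercive ((innerSL ℝ).comp T) := by
    refine ⟨c, hc, fun u => ?_⟩
    simpa [pow_two, mul_assoc] using h u
  set e := hB.continuousLinearEquivOfBilin with he
  have heq : ∀ v, e v = T v := by
    intro v
    refine ext_inner_right ℝ fun w => ?_
    rw [he, hB.continuousLinearEquivOfBilin_apply v w]
    rfl
  refine ⟨⟨T, (e.symm : H →L[ℝ] H), ?_, ?_⟩, rfl⟩
  · ext v
    simp [ContinuousLinearMap.mul_apply, ← heq]
  · ext v
    simp [ContinuousLinearMap.mul_apply, ← heq]


lemma cs_psd {T : H →L[ℝ] H} (hT : IsSelfAdjoint T)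
    (hpos : ∀ v, 0 ≤ ⟪T v, v⟫) (u w : H) :
    ⟪T u, w⟫ ^ 2 ≤ ⟪T u, u⟫ * ⟪T w, w⟫ := by
  have hsym : ⟪T w, u⟫ = ⟪T u, w⟫ := by
    rw [sa_inner hT, real_inner_comm]
  have key : ∀ t : ℝ, 0 ≤ ⟪T w, w⟫ * (t * t) + (2 * ⟪T u, w⟫) * t + ⟪T u, u⟫ := by
    intro t
    have h0 := hpos (u + t • w)
    have h1 : ⟪T (u + t • w), u + t • w⟫ =
        ⟪T w, w⟫ * (t * t) + (2 * ⟪T u, w⟫) * t + ⟪T u, u⟫ := by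
      simp only [map_add, map_smul, inner_add_left, inner_add_right,
        real_inner_smul_left, real_inner_smul_right, hsym]
      ring
    linarith [h1 ▸ h0]
  have hd := discrim_le_zero key
  rw [discrim] at hd
  nlinarith [hd]

lemma form_nonneg_of_spectrum [Nontrivial H] {T : H →L[ℝ] H} (hT : IsSelfAdjoint T)
    (hspec : ∀ μ ∈ spectrum ℝ T, 0 ≤ μ) (v : H) : 0 ≤ ⟪T v, v⟫ := by
  set Q : Set ℝ := (fun v : H => ⟪T v, v⟫) '' Metric.sphere 0 1 with hQ
  have hne : Q.Nonempty := by
    obtain ⟨x, hx⟩ := exists_norm_eq H (zero_le_one' ℝ)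
    exact ⟨⟪T x, x⟫, ⟨x, by simpa [mem_sphere_zero_iff_norm] using hx, rfl⟩⟩
  have hbdd : BddBelow Q := by
    refine ⟨-‖T‖, fun q hq => ?_⟩
    obtain ⟨x, hx, rfl⟩ := hq
    rw [mem_sphere_zero_iff_norm] at hx
    have h1 : |⟪T x, x⟫| ≤ ‖T x‖ * ‖x‖ := abs_real_inner_le_norm _ _
    have h2 : ‖T x‖ ≤ ‖T‖ * ‖x‖ := T.le_opNorm x
    rw [hx] at h1 h2
    simp only [mul_one] at h1 h2
    cases abs_le.mp (h1.trans h2) with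
    | intro hl hr => linarith
  set m := sInf Q with hm
  have hm1 : ∀ x : H, m * ‖x‖ ^ 2 ≤ ⟪T x, x⟫ := by
    intro x
    rcases eq_or_ne x 0 with rfl | hx
    · simp
    · have hnx : (0:ℝ) < ‖x‖ := norm_pos_iff.mpr hx
      set u := ‖x‖⁻¹ • x with hu
      have hunorm : ‖u‖ = 1 := by
        rw [hu, norm_smul, norm_inv, norm_norm, inv_mul_cancel₀ hnx.ne']
      have hmem : ⟪T u, u⟫ ∈ Q := ⟨u, by simpa [mem_sphere_zero_iff_norm] using hunorm, rfl⟩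
      have hle : m ≤ ⟪T u, u⟫ := csInf_le hbdd hmem
      have hval : ⟪T u, u⟫ = ‖x‖⁻¹ * (‖x‖⁻¹ * ⟪T x, x⟫) := by
        rw [hu, map_smul, real_inner_smul_left, real_inner_smul_right]
      rw [hval] at hle
      have h3 := mul_le_mul_of_nonneg_right hle (le_of_lt (mul_pos hnx hnx))
      calc m * ‖x‖ ^ 2 = m * (‖x‖ * ‖x‖) := by ring
        _ ≤ ‖x‖⁻¹ * (‖x‖⁻¹ * ⟪T x, x⟫) * (‖x‖ * ‖x‖) := h3
        _ = ⟪T x, x⟫ := by field_simp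
  have hmmem : m ∈ spectrum ℝ T := by
    rw [spectrum.mem_iff]
    intro hunit
    have hunit' : IsUnit (T - algebraMap ℝ (H →L[ℝ] H) m) := by
      have := hunit.neg
      rwa [neg_sub] at this
    obtain ⟨un, hun⟩ := hunit'
    set S' := T - algebraMap ℝ (H →L[ℝ] H) m with hS'
    set R : H →L[ℝ] H := ↑un⁻¹ with hR
    have hSA : IsSelfAdjoint S' := by
      refine hT.sub ?_
      rw [Algebra.algebraMap_eq_smul_one]
      simp [IsSelfAdjoint, star_smul]
    have hSapp : ∀ x, S' x = T x - m • x := by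
      intro x
      simp [hS', Algebra.algebraMap_eq_smul_one, ContinuousLinearMap.sub_apply]
    have hSR : ∀ x, S' (R x) = x := by
      intro x
      have h1 : S' * R = 1 := by rw [← hun, hR]; exact un.mul_inv
      calc S' (R x) = (S' * R) x := rfl
        _ = x := by rw [h1]; rfl
    have hpos' : ∀ x, 0 ≤ ⟪S' x, x⟫ := by
      intro x
      rw [hSapp, inner_sub_left, real_inner_smul_left, real_inner_self_eq_norm_sq]
      linarith [hm1 x]
    have hRne : R ≠ 0 := by
      intro h0
      obtain ⟨x, hx⟩ := exists_ne (0 : H)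
      have := hSR x
      rw [h0] at this
      simp at this
      exact hx this.symm
    have hRpos : (0:ℝ) < ‖R‖ := norm_pos_iff.mpr hRne
    obtain ⟨q, hqQ, hqlt⟩ := (csInf_lt_iff hbdd hne).mp
      (show sInf Q < m + ‖R‖⁻¹ by rw [← hm]; linarith [inv_pos.mpr hRpos])
    obtain ⟨x, hxs, rfl⟩ := hqQ
    rw [mem_sphere_zero_iff_norm] at hxs
    have hSx : ⟪S' x, x⟫ < ‖R‖⁻¹ := by
      rw [hSapp, inner_sub_left, real_inner_smul_left, real_inner_self_eq_norm_sq, hxs]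
      simp only [one_pow, mul_one]
      linarith
    have hcs := cs_psd hSA hpos' x (R x)
    have h1 : ⟪S' x, R x⟫ = 1 := by
      rw [sa_inner hSA, hSR, real_inner_self_eq_norm_sq, hxs]; norm_num
    have h2 : ⟪S' (R x), R x⟫ ≤ ‖R‖ := by
      rw [hSR]
      calc ⟪x, R x⟫ ≤ ‖x‖ * ‖R x‖ := real_inner_le_norm _ _
        _ ≤ ‖x‖ * (‖R‖ * ‖x‖) := by
            exact mul_le_mul_of_nonneg_left (R.le_opNorm x) (norm_nonneg x)
        _ = ‖R‖ := by rw [hxs]; ring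
    rw [h1] at hcs
    have h3 : (1:ℝ) ≤ ⟪S' x, x⟫ * ‖R‖ := by
      have h4 : 0 ≤ ⟪S' x, x⟫ := hpos' x
      nlinarith [hpos' (R x)]
    have h5 := mul_lt_mul_of_pos_right hSx hRpos
    rw [inv_mul_cancel₀ hRpos.ne'] at h5
    linarith
  have := hspec m hmmem
  calc (0:ℝ) ≤ m * ‖v‖ ^ 2 := mul_nonneg this (sq_nonneg _)
    _ ≤ ⟪T v, v⟫ := hm1 v


set_option maxHeartbeats 1000000 in
set_option synthInstance.maxHeartbeats 100000 in
lemma cubic_spectrum_nonneg {T : H →L[ℝ] H} (hT : IsSelfAdjoint T) {γ : ℝ} (hγ : 0 < γ)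
    (hσ : ∀ l ∈ spectrum ℝ T, l = 0 ∨ γ ≤ l) {μ : ℝ}
    (hμ : μ ∈ spectrum ℝ (T ^ 3 - γ • T ^ 2)) : 0 ≤ μ := by
  -- find a real root of x^3 - γ x^2 - μ
  have hcont : ContinuousOn (fun x : ℝ => x ^ 3 - γ * x ^ 2 - μ)
      (Set.Icc (-(1 + γ + |μ|)) (1 + γ + |μ|)) := by fun_prop
  have hab : -(1 + γ + |μ|) ≤ (1 + γ + |μ|) := by linarith [abs_nonneg μ, hγ]
  have hfb : 0 ≤ (fun x : ℝ => x ^ 3 - γ * x ^ 2 - μ) (1 + γ + |μ|) := by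
    have h1 : (0:ℝ) ≤ |μ| := abs_nonneg μ
    have h2 : μ ≤ |μ| := le_abs_self μ
    simp only
    nlinarith [sq_nonneg (1 + γ + |μ|), sq_nonneg (γ + |μ|)]
  have hfa : (fun x : ℝ => x ^ 3 - γ * x ^ 2 - μ) (-(1 + γ + |μ|)) ≤ 0 := by
    have h1 : (0:ℝ) ≤ |μ| := abs_nonneg μ
    have h2 : -|μ| ≤ μ := neg_abs_le μ
    simp only
    nlinarith [sq_nonneg (1 + γ + |μ|), sq_nonneg (γ + |μ|)]
  obtain ⟨r, -, hr⟩ := intermediate_value_Icc hab hcont ⟨hfa, hfb⟩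
  simp only at hr
  have hμr : μ = r ^ 2 * (r - γ) := by linear_combination -hr
  -- factorization
  have hnu : ¬ IsUnit (algebraMap ℝ (H →L[ℝ] H) μ - (T ^ 3 - γ • T ^ 2)) :=
    spectrum.mem_iff.mp hμ
  have hP : ((X - C r) * (X ^ 2 + C (r - γ) * X + C (r * (r - γ))) : ℝ[X])
      = X ^ 3 - C γ * X ^ 2 - C μ := by
    rw [hμr]
    simp only [map_sub, map_mul, map_pow]
    ring
  have haeval : aeval T ((X - C r) * (X ^ 2 + C (r - γ) * X + C (r * (r - γ))) : ℝ[X])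
      = (T ^ 3 - γ • T ^ 2) - algebraMap ℝ (H →L[ℝ] H) μ := by
    rw [hP]
    simp only [map_sub, map_mul, map_pow, aeval_X, aeval_C, Algebra.smul_def]
  have hnu' : ¬ IsUnit (aeval T ((X - C r) * (X ^ 2 + C (r - γ) * X + C (r * (r - γ))) : ℝ[X])) := by
    intro h
    rw [haeval] at h
    exact hnu (by simpa [neg_sub] using h.neg)
  rw [map_mul] at hnu'
  have hfac1 : (aeval T (X - C r : ℝ[X]) : H →L[ℝ] H) = T - algebraMap ℝ (H →L[ℝ] H) r := by
    simp [map_sub, aeval_X, aeval_C]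
  rw [hfac1] at hnu'
  have hone : ¬ IsUnit (T - algebraMap ℝ (H →L[ℝ] H) r) ∨
      ¬ IsUnit (aeval T (X ^ 2 + C (r - γ) * X + C (r * (r - γ)) : ℝ[X])) := by
    by_contra hcon
    push_neg at hcon
    exact hnu' (hcon.1.mul hcon.2)
  have hmem : ∀ ρ : ℝ, ¬ IsUnit (T - algebraMap ℝ (H →L[ℝ] H) ρ) → ρ = 0 ∨ γ ≤ ρ := by
    intro ρ hρ
    refine hσ ρ (spectrum.mem_iff.mpr ?_)
    intro h
    exact hρ (by simpa [neg_sub] using h.neg)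
  have hid : ∀ x : ℝ, x ^ 3 - γ * x ^ 2 - μ
      = (x - r) * (x ^ 2 + (r - γ) * x + r * (r - γ)) := by
    intro x; rw [hμr]; ring
  have hconc : ∀ ρ : ℝ, (ρ = 0 ∨ γ ≤ ρ) → μ = ρ ^ 2 * (ρ - γ) → 0 ≤ μ := by
    rintro ρ (rfl | hge) hμρ
    · simp [hμρ]
    · rw [hμρ]; nlinarith
  rcases hone with h1 | h2
  · exact hconc r (hmem r h1) hμr
  · -- analyze the quadratic factor
    by_cases hd : (r - γ) ^ 2 - 4 * (r * (r - γ)) < 0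
    · -- no real root : the quadratic factor is coercive, hence a unit
      exfalso
      apply h2
      have hF2 : (aeval T (X ^ 2 + C (r - γ) * X + C (r * (r - γ)) : ℝ[X]) : H →L[ℝ] H)
          = T ^ 2 + (r - γ) • T + (r * (r - γ)) • 1 := by
        simp only [map_add, map_mul, map_pow, aeval_X, aeval_C]
        rw [Algebra.algebraMap_eq_smul_one, Algebra.algebraMap_eq_smul_one,
          smul_mul_assoc, one_mul, smul_mul_smul, one_mul]
      rw [hF2]
      refine isUnit_of_coercive (c := r * (r - γ) - (r - γ) ^ 2 / 4) (by linarith) fun v => ?_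
      have happ : (T ^ 2 + (r - γ) • T + (r * (r - γ)) • (1 : H →L[ℝ] H)) v
          = T (T v) + (r - γ) • T v + (r * (r - γ)) • v := by
        simp [ContinuousLinearMap.add_apply, ContinuousLinearMap.smul_apply, pow_two,
          ContinuousLinearMap.mul_apply]
      have hTT : ⟪T (T v), v⟫ = ‖T v‖ ^ 2 := by
        rw [sa_inner hT, real_inner_self_eq_norm_sq]
      have hexp : ⟪(T ^ 2 + (r - γ) • T + (r * (r - γ)) • (1 : H →L[ℝ] H)) v, v⟫
          = ‖T v‖ ^ 2 + (r - γ) * ⟪T v, v⟫ + (r * (r - γ)) * ‖v‖ ^ 2 := by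
        rw [happ, inner_add_left, inner_add_left, real_inner_smul_left, real_inner_smul_left,
          hTT, real_inner_self_eq_norm_sq]
      have hsqexp : ‖T v + ((r - γ) / 2) • v‖ ^ 2
          = ‖T v‖ ^ 2 + (r - γ) * ⟪T v, v⟫ + ((r - γ) / 2) ^ 2 * ‖v‖ ^ 2 := by
        rw [norm_add_sq_real, real_inner_smul_right, norm_smul, Real.norm_eq_abs,
          mul_pow, sq_abs]
        ring
      have hsq : (0:ℝ) ≤ ‖T v + ((r - γ) / 2) • v‖ ^ 2 := sq_nonneg _
      rw [hexp]
      nlinarith [hsq, hsqexp]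
    · -- real roots
      push_neg at hd
      have hsq : Real.sqrt ((r - γ) ^ 2 - 4 * (r * (r - γ))) *
          Real.sqrt ((r - γ) ^ 2 - 4 * (r * (r - γ))) = (r - γ) ^ 2 - 4 * (r * (r - γ)) :=
        Real.mul_self_sqrt hd
      obtain ⟨sq, hsqdef⟩ : ∃ s : ℝ, s = Real.sqrt ((r - γ) ^ 2 - 4 * (r * (r - γ))) := ⟨_, rfl⟩
      rw [← hsqdef] at hsq
      obtain ⟨s1, hs1⟩ : ∃ s : ℝ, s = ((γ - r) + sq) / 2 := ⟨_, rfl⟩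
      obtain ⟨s2, hs2⟩ : ∃ s : ℝ, s = ((γ - r) - sq) / 2 := ⟨_, rfl⟩
      have hA : r - γ = -(s1 + s2) := by rw [hs1, hs2]; ring
      have hB : r * (r - γ) = s1 * s2 := by
        rw [hs1, hs2]
        linear_combination ((1:ℝ)/4) * hsq
      have hpoly : (X ^ 2 + C (r - γ) * X + C (r * (r - γ)) : ℝ[X])
          = (X - C s1) * (X - C s2) := by
        rw [hB, hA]
        simp only [map_neg, map_add, map_mul]
        ring
      rw [hpoly, map_mul] at h2
      have hfac : ∀ i : ℝ, (aeval T (X - C i : ℝ[X]) : H →L[ℝ] H)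
          = T - algebraMap ℝ (H →L[ℝ] H) i := by
        intro i; simp [map_sub, aeval_X, aeval_C]
      rw [hfac s1, hfac s2] at h2
      have hone2 : ¬ IsUnit (T - algebraMap ℝ (H →L[ℝ] H) s1) ∨
          ¬ IsUnit (T - algebraMap ℝ (H →L[ℝ] H) s2) := by
        by_contra hcon
        push_neg at hcon
        exact h2 (hcon.1.mul hcon.2)
      have hroot : ∀ i : ℝ, i ^ 2 + (r - γ) * i + r * (r - γ) = 0 → μ = i ^ 2 * (i - γ) := by
        intro i hi
        have h3 := hid i
        rw [hi, mul_zero] at h3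
        linarith [h3]
      have hs1root : s1 ^ 2 + (r - γ) * s1 + r * (r - γ) = 0 := by
        linear_combination s1 * hA + hB
      have hs2root : s2 ^ 2 + (r - γ) * s2 + r * (r - γ) = 0 := by
        linear_combination s2 * hA + hB
      rcases hone2 with h | h
      · exact hconc s1 (hmem s1 h) (hroot s1 hs1root)
      · exact hconc s2 (hmem s2 h) (hroot s2 hs2root)


lemma isSelfAdjoint_of_inner {T : H →L[ℝ] H} (h : ∀ x y, ⟪T x, y⟫ = ⟪x, T y⟫) :
    IsSelfAdjoint T :=
  ContinuousLinearMap.isSelfAdjoint_iff'.mpr (((T.eq_adjoint_iff T).mpr h).symm)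

set_option maxHeartbeats 1000000 in
set_option synthInstance.maxHeartbeats 100000 in
lemma key_coercive {E : Type*} [NormedAddCommGroup E] [InnerProductSpace ℝ E] [CompleteSpace E]
    (A : E →L[ℝ] E) (hA : IsSelfAdjoint A) (S : Submodule ℝ E) (hScl : IsClosed (S : Set E))
    (hSinv : ∀ v ∈ S, A v ∈ S) (hkerS : ∀ v : E, A v = 0 → v ∈ S)
    (hpos : ∀ v ∈ Sᗮ, 0 ≤ ⟪v, A v⟫) {γ : ℝ} (hγ : 0 < γ)
    (hspec : ∀ μ ∈ spectrum ℝ A, 0 < μ → γ ≤ μ) :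
    ∀ v ∈ Sᗮ, γ * ‖v‖ ^ 2 ≤ ⟪v, A v⟫ := by
  haveI : CompleteSpace S := hScl.completeSpace_coe
  haveI : CompleteSpace (Sᗮ : Submodule ℝ E) := (Submodule.isClosed_orthogonal S).completeSpace_coe
  rcases subsingleton_or_nontrivial (Sᗮ : Submodule ℝ E) with hss | hnt
  · intro v hv
    have h0 : (⟨v, hv⟩ : Sᗮ) = (0 : Sᗮ) := Subsingleton.elim _ _
    have : v = 0 := by simpa using congrArg (Subtype.val) h0
    simp [this]
  -- invariance
  have hMinv : ∀ v ∈ Sᗮ, A v ∈ Sᗮ := by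
    intro v hv
    intro s hs
    rw [← sa_inner hA]
    exact hv (A s) (hSinv s hs)
  set T : Sᗮ →L[ℝ] Sᗮ :=
    (Submodule.orthogonalProjectionOnto Sᗮ).comp (A.comp (Sᗮ : Submodule ℝ E).subtypeL) with hTdef
  have hTcoe : ∀ m : Sᗮ, (T m : E) = A m :=
    fun m => Submodule.starProjection_eq_self_iff.mpr (hMinv _ m.2)
  have hTinner : ∀ x y : Sᗮ, ⟪T x, y⟫ = ⟪x, T y⟫ := by
    intro x y
    rw [Submodule.coe_inner, Submodule.coe_inner, hTcoe, hTcoe]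
    exact sa_inner hA (x : E) (y : E)
  have hT : IsSelfAdjoint T := isSelfAdjoint_of_inner hTinner
  have hTpos : ∀ m : Sᗮ, 0 ≤ ⟪T m, m⟫ := by
    intro m
    rw [Submodule.coe_inner, hTcoe, real_inner_comm]
    exact hpos _ m.2
  -- spectrum of the restriction
  have hσT : spectrum ℝ T ⊆ spectrum ℝ A := by
    intro lam hlam
    by_contra hlamA
    obtain ⟨u, hu⟩ := spectrum.notMem_iff.mp hlamA
    set R : E →L[ℝ] E := ↑u⁻¹ with hRdef
    have hRl : ∀ x, R ((algebraMap ℝ (E →L[ℝ] E) lam - A) x) = x := by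
      intro x
      have h1 : R * (algebraMap ℝ (E →L[ℝ] E) lam - A) = 1 := by rw [← hu]; exact u.inv_mul
      calc R ((algebraMap ℝ (E →L[ℝ] E) lam - A) x)
          = (R * (algebraMap ℝ (E →L[ℝ] E) lam - A)) x := rfl
        _ = x := by rw [h1]; rfl
    have hRr : ∀ x, (algebraMap ℝ (E →L[ℝ] E) lam - A) (R x) = x := by
      intro x
      have h1 : (algebraMap ℝ (E →L[ℝ] E) lam - A) * R = 1 := by rw [← hu]; exact u.mul_inv
      calc (algebraMap ℝ (E →L[ℝ] E) lam - A) (R x)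
          = ((algebraMap ℝ (E →L[ℝ] E) lam - A) * R) x := rfl
        _ = x := by rw [h1]; rfl
    have happ : ∀ x : E, (algebraMap ℝ (E →L[ℝ] E) lam - A) x = lam • x - A x := by
      intro x
      rw [ContinuousLinearMap.sub_apply, Algebra.algebraMap_eq_smul_one]
      simp
    have hRM : ∀ x ∈ Sᗮ, R x ∈ Sᗮ := by
      intro x hx
      have hdecomp : R x = (Submodule.orthogonalProjectionOnto S (R x) : E)
          + (R x - Submodule.orthogonalProjectionOnto S (R x)) := by abel
      have hsmem : (Submodule.orthogonalProjectionOnto S (R x) : E) ∈ S := (Submodule.orthogonalProjectionOnto S (R x)).2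
      have htmem : (R x - Submodule.orthogonalProjectionOnto S (R x) : E) ∈ Sᗮ :=
        Submodule.sub_starProjection_mem_orthogonal (R x)
      set s : E := (Submodule.orthogonalProjectionOnto S (R x) : E)
      set t : E := R x - Submodule.orthogonalProjectionOnto S (R x)
      have hws : lam • s - A s ∈ S := S.sub_mem (S.smul_mem lam hsmem) (hSinv s hsmem)
      have hwt : lam • t - A t ∈ Sᗮ := Sᗮ.sub_mem (Sᗮ.smul_mem lam htmem) (hMinv t htmem)
      have hx' : (algebraMap ℝ (E →L[ℝ] E) lam - A) (R x) = x := hRr x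
      have hsum : lam • s - A s + (lam • t - A t) = x := by
        have : (algebraMap ℝ (E →L[ℝ] E) lam - A) (s + t) = x := by
          rw [← hdecomp]; exact hx'
        rw [happ] at this
        rw [← this]
        simp [smul_add, map_add]
        abel
      have hwsM : lam • s - A s ∈ Sᗮ := by
        have : lam • s - A s = x - (lam • t - A t) := by
          rw [← hsum]; abel
        rw [this]
        exact Sᗮ.sub_mem hx hwt
      have hws0 : lam • s - A s = 0 := by
        have := hwsM _ hws
        rwa [real_inner_self_eq_norm_sq, pow_eq_zero_iff (by norm_num), norm_eq_zero] at this
      have hs0 : s = 0 := by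
        have h2 : (algebraMap ℝ (E →L[ℝ] E) lam - A) s = 0 := by rw [happ]; exact hws0
        have := hRl s
        rw [h2, map_zero] at this
        exact this.symm
      have : R x = t := by rw [hdecomp, hs0, zero_add]
      rw [this]; exact htmem
    -- build the inverse of the restriction
    set R' : Sᗮ →L[ℝ] Sᗮ :=
      (Submodule.orthogonalProjectionOnto Sᗮ).comp (R.comp (Sᗮ : Submodule ℝ E).subtypeL) with hR'def
    have hR'coe : ∀ m : Sᗮ, (R' m : E) = R m :=
      fun m => Submodule.starProjection_eq_self_iff.mpr (hRM _ m.2)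
    have hTlam : ∀ m : Sᗮ, (((algebraMap ℝ (Sᗮ →L[ℝ] Sᗮ) lam - T) m : Sᗮ) : E)
        = (algebraMap ℝ (E →L[ℝ] E) lam - A) (m : E) := by
      intro m
      rw [happ, ContinuousLinearMap.sub_apply, Algebra.algebraMap_eq_smul_one]
      push_cast
      rw [hTcoe]
      simp
    have h1 : (algebraMap ℝ (Sᗮ →L[ℝ] Sᗮ) lam - T) * R' = 1 := by
      ext m
      rw [ContinuousLinearMap.mul_apply, ContinuousLinearMap.one_apply, hTlam, hR'coe, hRr]
    have h2 : R' * (algebraMap ℝ (Sᗮ →L[ℝ] Sᗮ) lam - T) = 1 := by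
      ext m
      rw [ContinuousLinearMap.mul_apply, ContinuousLinearMap.one_apply, hR'coe, hTlam, hRl]
    exact (spectrum.mem_iff.mp hlam) ⟨⟨_, R', h1, h2⟩, rfl⟩
  -- spectrum of T is nonnegative
  have hσnn : ∀ l ∈ spectrum ℝ T, 0 ≤ l := by
    intro l hl
    by_contra hneg
    push_neg at hneg
    have hco : IsUnit (T - algebraMap ℝ (Sᗮ →L[ℝ] Sᗮ) l) := by
      refine isUnit_of_coercive (c := -l) (by linarith) fun m => ?_
      have : (T - algebraMap ℝ (Sᗮ →L[ℝ] Sᗮ) l) m = T m - l • m := by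
        rw [ContinuousLinearMap.sub_apply, Algebra.algebraMap_eq_smul_one]
        simp
      rw [this, inner_sub_left, real_inner_smul_left, real_inner_self_eq_norm_sq]
      have := hTpos m
      nlinarith
    exact (spectrum.mem_iff.mp hl) (by simpa [neg_sub] using hco.neg)
  have hσ' : ∀ l ∈ spectrum ℝ T, l = 0 ∨ γ ≤ l := by
    intro l hl
    rcases eq_or_lt_of_le (hσnn l hl) with h | h
    · exact Or.inl h.symm
    · exact Or.inr (hspec l (hσT hl) h)
  -- positivity of T^3 - γ T^2
  have hSA3 : IsSelfAdjoint (T ^ 3 - γ • T ^ 2) := by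
    apply isSelfAdjoint_of_inner
    intro x y
    have e3 : ∀ z : Sᗮ, (T ^ 3) z = T (T (T z)) := fun z => by
      simp [pow_succ, ContinuousLinearMap.mul_apply]
    have e2 : ∀ z : Sᗮ, (T ^ 2) z = T (T z) := fun z => by
      simp [pow_succ, ContinuousLinearMap.mul_apply]
    rw [ContinuousLinearMap.sub_apply, ContinuousLinearMap.sub_apply,
      ContinuousLinearMap.smul_apply, ContinuousLinearMap.smul_apply,
      inner_sub_left, inner_sub_right, real_inner_smul_left, real_inner_smul_right,
      e3, e3, e2, e2, sa_inner hT (T (T x)) y, sa_inner hT (T x) (T y),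
      sa_inner hT x (T (T y)), sa_inner hT (T x) y, sa_inner hT x (T y)]
  have hform : ∀ w : Sᗮ, 0 ≤ ⟪(T ^ 3 - γ • T ^ 2) w, w⟫ :=
    form_nonneg_of_spectrum hSA3 (fun μ hμ => cubic_spectrum_nonneg hT hγ hσ' hμ)
  have hrange : ∀ w : Sᗮ, γ * ‖T w‖ ^ 2 ≤ ⟪T (T w), T w⟫ := by
    intro w
    have h3 := hform w
    have hexp : ⟪(T ^ 3 - γ • T ^ 2) w, w⟫ = ⟪T (T w), T w⟫ - γ * ‖T w‖ ^ 2 := by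
      have e3 : (T ^ 3) w = T (T (T w)) := by
        simp [pow_succ, ContinuousLinearMap.mul_apply]
      have e2 : (T ^ 2) w = T (T w) := by
        simp [pow_succ, ContinuousLinearMap.mul_apply]
      have e1 : ⟪T (T (T w)), w⟫ = ⟪T (T w), T w⟫ := sa_inner hT (T (T w)) w
      have e4 : ⟪T (T w), w⟫ = ‖T w‖ ^ 2 := by
        rw [sa_inner hT (T w) w, real_inner_self_eq_norm_sq]
      rw [ContinuousLinearMap.sub_apply, ContinuousLinearMap.smul_apply, inner_sub_left,
        real_inner_smul_left, e3, e2, e1, e4]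
    linarith [hexp ▸ h3]
  -- density of the range of T
  have hTinj : ∀ m : Sᗮ, T m = 0 → m = 0 := by
    intro m hm
    have h1 : A (m : E) = 0 := by
      rw [← hTcoe m, hm]; rfl
    have h2 : (m : E) ∈ S := hkerS _ h1
    have h3 : ⟪(m : E), (m : E)⟫ = 0 := m.2 _ h2
    rw [real_inner_self_eq_norm_sq, pow_eq_zero_iff (by norm_num), norm_eq_zero] at h3
    exact Subtype.coe_injective h3
  have hdense : Dense (LinearMap.range (T : Sᗮ →ₗ[ℝ] Sᗮ) : Set Sᗮ) := by
    rw [Submodule.dense_iff_topologicalClosure_eq_top,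
      ← Submodule.orthogonal_orthogonal_eq_closure]
    have hbot : (LinearMap.range (T : Sᗮ →ₗ[ℝ] Sᗮ))ᗮ = ⊥ := by
      rw [Submodule.eq_bot_iff]
      intro v hv
      have hTv : T v = 0 := by
        have h1 : ∀ u : Sᗮ, ⟪u, T v⟫ = 0 := by
          intro u
          rw [← hTinner u v]
          exact hv (T u) (LinearMap.mem_range_self _ u)
        have := h1 (T v)
        rwa [real_inner_self_eq_norm_sq, pow_eq_zero_iff (by norm_num), norm_eq_zero] at this
      exact hTinj v hTv
    rw [hbot, Submodule.bot_orthogonal_eq_top]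
  -- conclude by continuity
  have hC : ∀ v : Sᗮ, γ * ‖v‖ ^ 2 ≤ ⟪T v, v⟫ := by
    have hclosed : IsClosed {v : Sᗮ | γ * ‖v‖ ^ 2 ≤ ⟪T v, v⟫} := by
      apply isClosed_le
      · fun_prop
      · exact Continuous.inner (T.continuous) continuous_id
    have hsub : (LinearMap.range (T : Sᗮ →ₗ[ℝ] Sᗮ) : Set Sᗮ) ⊆ {v : Sᗮ | γ * ‖v‖ ^ 2 ≤ ⟪T v, v⟫} := by
      rintro _ ⟨w, rfl⟩
      exact hrange w
    intro v
    have hvmem : v ∈ closure (LinearMap.range (T : Sᗮ →ₗ[ℝ] Sᗮ) : Set Sᗮ) := hdense v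
    have := closure_minimal hsub hclosed
    exact this hvmem
  intro v hv
  have := hC ⟨v, hv⟩
  rw [Submodule.coe_inner, hTcoe] at this
  rw [real_inner_comm] at this
  exact this


end AuxiliaryLemmas

set_option maxHeartbeats 4000000 in
set_option synthInstance.maxHeartbeats 400000 in
/-- Coercivity step in the proof of Theorem 3.1 (Hilbert space case): if `B` is a
continuous symmetric bilinear form with associated bounded self-adjoint operator `A`,
`E₀ = Ker A` is finite dimensional, `Y` is a closed subspace of `E₀^⊥` of finite
codimension in `E₀^⊥` on which `B` is positive definite, the positive part of the
spectrum of `A` is bounded away from `0`, and the negative spectral subspace of `A`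
is finite dimensional, then `B` is coercive on `Y`. -/
theorem stmt_11 {E : Type*} [NormedAddCommGroup E] [InnerProductSpace ℝ E]
    [CompleteSpace E]
    (A : E →L[ℝ] E) (hA : IsSelfAdjoint A)
    (B : E → E → ℝ) (hB : ∀ v w : E, B v w = ⟪v, A w⟫)
    (hker : FiniteDimensional ℝ (LinearMap.ker (A : E →ₗ[ℝ] E)))
    (Y : Submodule ℝ E) (hYclosed : IsClosed (Y : Set E))
    (hYsub : Y ≤ (LinearMap.ker (A : E →ₗ[ℝ] E))ᗮ)
    (hcodim : ∃ V : Submodule ℝ E, FiniteDimensional ℝ V ∧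
      Y ⊔ V = (LinearMap.ker (A : E →ₗ[ℝ] E))ᗮ)
    (hYpos : ∀ v ∈ Y, v ≠ 0 → 0 < B v v)
    (hgap : ∃ γ : ℝ, 0 < γ ∧ ∀ μ ∈ spectrum ℝ A, 0 < μ → γ ≤ μ)
    (hneg : ∃ N : Submodule ℝ E, FiniteDimensional ℝ N ∧
      (∀ v ∈ N, A v ∈ N) ∧ (∀ v ∈ N, v ≠ 0 → ⟪v, A v⟫ < 0) ∧
      (∀ v ∈ Nᗮ, 0 ≤ ⟪v, A v⟫)) :
    ∃ δ : ℝ, 0 < δ ∧ ∀ v ∈ Y, δ * ‖v‖ ^ 2 ≤ B v v := by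
  classical
  obtain ⟨γ, hγpos, hγ⟩ := hgap
  obtain ⟨N, hNfd, hNinv, hNneg, hNpos⟩ := hneg
  -- the finite dimensional invariant subspace S = N ⊔ ker A
  set S : Submodule ℝ E := N ⊔ LinearMap.ker (A : E →ₗ[ℝ] E) with hSdef
  haveI : FiniteDimensional ℝ S := Submodule.finiteDimensional_sup N (LinearMap.ker (A : E →ₗ[ℝ] E))
  have hScl : IsClosed (S : Set E) := Submodule.closed_of_finiteDimensional S
  have hSinv : ∀ v ∈ S, A v ∈ S := by
    intro v hv
    obtain ⟨n, hn, k, hk, rfl⟩ := Submodule.mem_sup.mp hv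
    have hk0 : A k = 0 := hk
    rw [map_add, hk0, add_zero]
    exact Submodule.mem_sup_left (hNinv n hn)
  have hkerS : ∀ v : E, A v = 0 → v ∈ S := fun v hv =>
    Submodule.mem_sup_right (LinearMap.mem_ker.mpr hv)
  have hSpos : ∀ v ∈ Sᗮ, 0 ≤ ⟪v, A v⟫ := fun v hv =>
    hNpos v ((Submodule.orthogonal_le le_sup_left) hv)
  have hM := key_coercive A hA S hScl hSinv hkerS hSpos hγpos hγ
  -- now work inside Y
  haveI : CompleteSpace Y := hYclosed.completeSpace_coe
  set TY : Y →L[ℝ] Y := (Submodule.orthogonalProjectionOnto Y).comp (A.comp Y.subtypeL) with hTYdef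
  have hq : ∀ x y : Y, ⟪x, TY y⟫ = ⟪(x : E), A (y : E)⟫ := by
    intro x y
    have h0 : TY y = Submodule.orthogonalProjectionOnto Y (A (y : E)) := rfl
    rw [h0, Submodule.inner_orthogonalProjectionOnto_eq_of_mem_left]
  have hTYsym : ∀ x y : Y, ⟪TY x, y⟫ = ⟪x, TY y⟫ := by
    intro x y
    rw [real_inner_comm, hq y x, hq x y, real_inner_comm, sa_inner hA]
  -- the subspace Y₁ of Y
  set Y₁ : Submodule ℝ Y := Sᗮ.comap Y.subtype with hY₁def
  have hY₁mem : ∀ z : Y, z ∈ Y₁ ↔ (z : E) ∈ Sᗮ := fun z => Iff.rfl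
  have hY₁cl : IsClosed (Y₁ : Set Y) := by
    have : (Y₁ : Set Y) = (Subtype.val : Y → E) ⁻¹' (Sᗮ : Set E) := rfl
    rw [this]
    exact (Submodule.isClosed_orthogonal S).preimage continuous_subtype_val
  haveI : CompleteSpace Y₁ := hY₁cl.completeSpace_coe
  set P₁ : Y →L[ℝ] Y₁ := Submodule.orthogonalProjectionOnto Y₁ with hP₁def
  set T₁ : Y₁ →L[ℝ] Y₁ := P₁.comp (TY.comp Y₁.subtypeL) with hT₁def
  have hq₁ : ∀ (u : Y₁) (z : Y), ⟪u, P₁ z⟫ = ⟪(u : Y), z⟫ := by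
    intro u z
    have h0 : P₁ z = Submodule.orthogonalProjectionOnto Y₁ z := rfl
    rw [h0, Submodule.inner_orthogonalProjectionOnto_eq_of_mem_left]
  have hT₁coer : ∀ u : Y₁, γ * ‖u‖ ^ 2 ≤ ⟪T₁ u, u⟫ := by
    intro u
    have h1 : ⟪T₁ u, u⟫ = ⟪((u : Y) : E), A ((u : Y) : E)⟫ := by
      rw [real_inner_comm, hT₁def, ContinuousLinearMap.comp_apply, ContinuousLinearMap.comp_apply,
        hq₁ u (TY (Y₁.subtypeL u)), hq]
      rfl
    rw [h1]
    have h3 := hM ((u : Y) : E) ((hY₁mem (u : Y)).mp u.2)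
    have h4 : ‖u‖ = ‖((u : Y) : E)‖ := rfl
    rw [h4]
    exact h3
  have hT₁unit : IsUnit T₁ := by
    exact isUnit_of_coercive (H := Y₁) hγpos hT₁coer
  obtain ⟨e, he⟩ := hT₁unit
  set R₁ : Y₁ →L[ℝ] Y₁ := ↑e⁻¹ with hR₁def
  have hR₁l : ∀ z, R₁ (T₁ z) = z := by
    intro z
    have h1 : R₁ * T₁ = 1 := by rw [← he]; exact e.inv_mul
    calc R₁ (T₁ z) = (R₁ * T₁) z := rfl
      _ = z := by rw [h1]; rfl
  have hR₁r : ∀ z, T₁ (R₁ z) = z := by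
    intro z
    have h1 : T₁ * R₁ = 1 := by rw [← he]; exact e.mul_inv
    calc T₁ (R₁ z) = (T₁ * R₁) z := rfl
      _ = z := by rw [h1]; rfl
  -- the correction map Φ
  set Φ : Y →L[ℝ] Y :=
    ContinuousLinearMap.id ℝ Y - Y₁.subtypeL.comp (R₁.comp (P₁.comp TY)) with hΦdef
  have hΦ : ∀ w : Y, Φ w = w - (R₁ (P₁ (TY w)) : Y) := by
    intro w
    simp [hΦdef, ContinuousLinearMap.sub_apply, ContinuousLinearMap.comp_apply]
  have hT₁eq : ∀ z : Y₁, T₁ z = P₁ (TY (z : Y)) := fun z => rfl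
  have ha' : ∀ w : Y, P₁ (TY (Φ w)) = 0 := by
    intro w
    rw [hΦ, map_sub, map_sub]
    have : P₁ (TY ((R₁ (P₁ (TY w)) : Y₁) : Y)) = P₁ (TY w) := by
      rw [← hT₁eq, hR₁r]
    rw [this, sub_self]
  have ha : ∀ (w : Y) (u : Y), u ∈ Y₁ → ⟪u, TY (Φ w)⟫ = 0 := by
    intro w u hu
    have h1 : ⟪(⟨u, hu⟩ : Y₁), P₁ (TY (Φ w))⟫ = ⟪u, TY (Φ w)⟫ := hq₁ ⟨u, hu⟩ (TY (Φ w))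
    rw [← h1, ha', inner_zero_right]
  -- the finite dimensional complement W = Y₁ᗮ
  haveI : CompleteSpace N := FiniteDimensional.complete ℝ N
  have hWfd : FiniteDimensional ℝ Y₁ᗮ := by
    set φ : Y₁ᗮ →ₗ[ℝ] N :=
      ((Submodule.orthogonalProjectionOnto N).toLinearMap.comp (Y.subtype.comp Y₁ᗮ.subtype)) with hφdef
    refine FiniteDimensional.of_injective φ ?_
    intro w1 w2 hww
    have hdiff : Submodule.orthogonalProjectionOnto N (((w1 - w2 : Y₁ᗮ) : Y) : E) = 0 := by
      have : φ (w1 - w2) = 0 := by rw [map_sub, hww, sub_self]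
      simpa [hφdef] using this
    have hNorth : (((w1 - w2 : Y₁ᗮ) : Y) : E) ∈ Nᗮ := Submodule.orthogonalProjectionOnto_eq_zero_iff.mp hdiff
    have hY₁m : ((w1 - w2 : Y₁ᗮ) : Y) ∈ Y₁ := by
      rw [hY₁mem]
      intro s hs
      obtain ⟨n, hn, k, hk, rfl⟩ := Submodule.mem_sup.mp hs
      rw [inner_add_left]
      have e1 : ⟪n, (((w1 - w2 : Y₁ᗮ) : Y) : E)⟫ = 0 := hNorth n hn
      have e2 : ⟪k, (((w1 - w2 : Y₁ᗮ) : Y) : E)⟫ = 0 :=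
        (hYsub ((w1 - w2 : Y₁ᗮ) : Y).2) k hk
      rw [e1, e2, add_zero]
    have hzero : ((w1 - w2 : Y₁ᗮ) : Y) = 0 := by
      have h3 := (w1 - w2).2 _ hY₁m
      rwa [real_inner_self_eq_norm_sq, pow_eq_zero_iff (by norm_num), norm_eq_zero] at h3
    have : (w1 - w2 : Y₁ᗮ) = 0 := Subtype.coe_injective hzero
    exact sub_eq_zero.mp (by exact_mod_cast this)
  -- positivity of the form on Φ of the complement
  have hΦpos : ∀ w : Y, w ∈ Y₁ᗮ → w ≠ 0 → 0 < ⟪Φ w, TY (Φ w)⟫ := by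
    intro w hw hwne
    have hΦne : Φ w ≠ 0 := by
      intro h0
      have h2 := hΦ w
      rw [h0] at h2
      have h1 : w = ((R₁ (P₁ (TY w)) : Y₁) : Y) := sub_eq_zero.mp h2.symm
      have hwY₁ : w ∈ Y₁ := h1 ▸ (R₁ (P₁ (TY w)) : Y₁).2
      have h3 := hw w hwY₁
      rw [real_inner_self_eq_norm_sq, pow_eq_zero_iff (by norm_num), norm_eq_zero] at h3
      exact hwne h3
    have h4 : ⟪Φ w, TY (Φ w)⟫ = B ((Φ w : Y) : E) ((Φ w : Y) : E) := by
      rw [hq, hB]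
    rw [h4]
    refine hYpos _ (Φ w : Y).2 ?_
    intro h5
    exact hΦne (by exact_mod_cast Subtype.coe_injective h5)
  -- uniform positivity constant on the complement
  obtain ⟨c₀, hc₀pos, hc₀⟩ : ∃ c₀ : ℝ, 0 < c₀ ∧
      ∀ w ∈ Y₁ᗮ, c₀ * ‖w‖ ^ 2 ≤ ⟪Φ w, TY (Φ w)⟫ := by
    by_cases hWtriv : Y₁ᗮ = (⊥ : Submodule ℝ Y)
    · refine ⟨1, one_pos, fun w hw => ?_⟩
      rw [hWtriv, Submodule.mem_bot] at hw
      simp [hw]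
    · haveI : FiniteDimensional ℝ Y₁ᗮ := hWfd
      haveI : ProperSpace Y₁ᗮ := FiniteDimensional.proper ℝ Y₁ᗮ
      haveI : Nontrivial Y₁ᗮ := by
        obtain ⟨x, hx, hxne⟩ := (Submodule.ne_bot_iff Y₁ᗮ).mp hWtriv
        exact ⟨⟨⟨x, hx⟩, 0, by simp [Subtype.ext_iff, hxne]⟩⟩
      have hcomp : IsCompact (Metric.sphere (0 : Y₁ᗮ) 1) := isCompact_sphere _ _
      have hne : (Metric.sphere (0 : Y₁ᗮ) 1).Nonempty :=
        NormedSpace.sphere_nonempty.mpr zero_le_one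
      have hcontF : ContinuousOn (fun w : Y₁ᗮ => ⟪Φ (w : Y), TY (Φ (w : Y))⟫)
          (Metric.sphere (0 : Y₁ᗮ) 1) := by
        apply Continuous.continuousOn
        exact Continuous.inner (Φ.continuous.comp continuous_subtype_val)
          (TY.continuous.comp (Φ.continuous.comp continuous_subtype_val))
      obtain ⟨w₀, hw₀mem, hw₀min⟩ := hcomp.exists_isMinOn hne hcontF
      have hw₀norm : ‖(w₀ : Y₁ᗮ)‖ = 1 := by
        rwa [mem_sphere_zero_iff_norm] at hw₀mem
      have hw₀ne : ((w₀ : Y₁ᗮ) : Y) ≠ 0 := by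
        intro h
        rw [← norm_eq_zero] at h
        have : ‖(w₀ : Y₁ᗮ)‖ = ‖((w₀ : Y₁ᗮ) : Y)‖ := rfl
        rw [this, h] at hw₀norm
        norm_num at hw₀norm
      set c₀ := ⟪Φ ((w₀ : Y₁ᗮ) : Y), TY (Φ ((w₀ : Y₁ᗮ) : Y))⟫ with hc₀def
      have hc₀pos : 0 < c₀ := hΦpos _ (w₀ : Y₁ᗮ).2 hw₀ne
      refine ⟨c₀, hc₀pos, fun w hw => ?_⟩
      rcases eq_or_ne w 0 with rfl | hwne
      · simp
      · have hnw : (0:ℝ) < ‖w‖ := norm_pos_iff.mpr hwne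
        set wn : Y := ‖w‖⁻¹ • w with hwn
        have hwnmem : wn ∈ Y₁ᗮ := Y₁ᗮ.smul_mem _ hw
        have hwnnorm : ‖(⟨wn, hwnmem⟩ : Y₁ᗮ)‖ = 1 := by
          have : ‖(⟨wn, hwnmem⟩ : Y₁ᗮ)‖ = ‖wn‖ := rfl
          rw [this, hwn, norm_smul, norm_inv, norm_norm, inv_mul_cancel₀ hnw.ne']
        have hsph : (⟨wn, hwnmem⟩ : Y₁ᗮ) ∈ Metric.sphere (0 : Y₁ᗮ) 1 := by
          rwa [mem_sphere_zero_iff_norm]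
        have hmin := (isMinOn_iff.mp hw₀min) _ hsph
        have hval : ⟪Φ wn, TY (Φ wn)⟫ = ‖w‖⁻¹ * (‖w‖⁻¹ * ⟪Φ w, TY (Φ w)⟫) := by
          rw [hwn, map_smul, map_smul, real_inner_smul_left, real_inner_smul_right]
        rw [hval] at hmin
        have h6 := mul_le_mul_of_nonneg_right hmin (le_of_lt (mul_pos hnw hnw))
        calc c₀ * ‖w‖ ^ 2 = c₀ * (‖w‖ * ‖w‖) := by ring
          _ ≤ ‖w‖⁻¹ * (‖w‖⁻¹ * ⟪Φ w, TY (Φ w)⟫) * (‖w‖ * ‖w‖) := h6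
          _ = ⟪Φ w, TY (Φ w)⟫ := by
              field_simp
  -- the operator norm bound
  set Kc : ℝ := max ‖Φ‖ 1 with hKc
  have hKcpos : (0:ℝ) < Kc := lt_of_lt_of_le one_pos (le_max_right _ _)
  have hΦbound : ∀ w : Y, ‖Φ w‖ ≤ Kc * ‖w‖ := by
    intro w
    calc ‖Φ w‖ ≤ ‖Φ‖ * ‖w‖ := Φ.le_opNorm w
      _ ≤ Kc * ‖w‖ := mul_le_mul_of_nonneg_right (le_max_left _ _) (norm_nonneg w)
  -- the final constant
  refine ⟨min γ (c₀ / Kc ^ 2) / 2, by positivity, ?_⟩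
  intro v hv
  set δ := min γ (c₀ / Kc ^ 2) / 2 with hδ
  set v' : Y := ⟨v, hv⟩ with hv'
  -- decompose v' = y + w
  have hsup : v' ∈ Y₁ ⊔ Y₁ᗮ := by
    rw [Submodule.isCompl_orthogonal_of_hasOrthogonalProjection.sup_eq_top]
    trivial
  obtain ⟨y, hy, w, hw, hyw⟩ := Submodule.mem_sup.mp hsup
  set u : Y := y + ((R₁ (P₁ (TY w)) : Y₁) : Y) with hu
  have huY₁ : u ∈ Y₁ := Y₁.add_mem hy (R₁ (P₁ (TY w)) : Y₁).2
  have hvu : v' = u + Φ w := by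
    rw [hΦ, hu, ← hyw]
    abel
  have hsplit : ⟪v', TY v'⟫ = ⟪u, TY u⟫ + ⟪Φ w, TY (Φ w)⟫ := by
    rw [hvu, inner_add_left, map_add, inner_add_right, inner_add_right]
    have e1 : ⟪u, TY (Φ w)⟫ = 0 := ha w u huY₁
    have e2 : ⟪Φ w, TY u⟫ = 0 := by
      rw [← hTYsym, real_inner_comm]
      exact ha w u huY₁
    rw [e1, e2]
    ring
  have hqu : γ * ‖u‖ ^ 2 ≤ ⟪u, TY u⟫ := by
    have h1 : ⟪u, TY u⟫ = ⟪(u : E), A (u : E)⟫ := hq u u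
    have h2 := hM (u : E) huY₁
    rw [h1]
    have h3 : ‖u‖ = ‖(u : E)‖ := rfl
    rw [h3]
    exact h2
  have hgw : c₀ * ‖w‖ ^ 2 ≤ ⟪Φ w, TY (Φ w)⟫ := hc₀ w hw
  have hnormv : ‖v'‖ ≤ ‖u‖ + Kc * ‖w‖ := by
    rw [hvu]
    calc ‖u + Φ w‖ ≤ ‖u‖ + ‖Φ w‖ := norm_add_le _ _
      _ ≤ ‖u‖ + Kc * ‖w‖ := by linarith [hΦbound w]
  have hBvv : B v v = ⟪v', TY v'⟫ := by
    rw [hB, ← hq v' v']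
  rw [hBvv, hsplit]
  -- numeric conclusion
  have hnv : ‖v‖ = ‖v'‖ := rfl
  have hδγ : 2 * δ ≤ γ := by
    rw [hδ]
    have := min_le_left γ (c₀ / Kc ^ 2)
    linarith
  have hδc : 2 * δ * Kc ^ 2 ≤ c₀ := by
    have h1 : 2 * δ ≤ c₀ / Kc ^ 2 := by
      rw [hδ]
      have := min_le_right γ (c₀ / Kc ^ 2)
      linarith
    have h2 : (0:ℝ) < Kc ^ 2 := by positivity
    calc 2 * δ * Kc ^ 2 ≤ (c₀ / Kc ^ 2) * Kc ^ 2 := mul_le_mul_of_nonneg_right h1 h2.le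
      _ = c₀ := by field_simp
  have hδpos : 0 < δ := by rw [hδ]; positivity
  have hv2 : ‖v'‖ ^ 2 ≤ (‖u‖ + Kc * ‖w‖) ^ 2 :=
    pow_le_pow_left₀ (norm_nonneg _) hnormv 2
  rw [hnv]
  nlinarith [hqu, hgw, hv2, sq_nonneg (‖u‖ - Kc * ‖w‖), norm_nonneg u, norm_nonneg w,
    mul_pos hδpos (mul_pos hKcpos hKcpos), hKcpos, hδpos]
end
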